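/- Let A, B, C be noncollinear points in the plane with a = dist B C, b = dist A C, c = dist A B satisfying a ≤ b ≤ c, and angles β = ∠ A B C, γ = ∠ B C A. If tan β ≤ sin γ, then β < π/2 and b ≤ c · cos β (equivalently, 1/cos β ≤ c/b). -/

import Mathlib

/-!
Since `b ≤ c`, the angle `β` opposite `b` is at most the angle `γ` opposite `c`; as `β + γ < π`,
this forces `β < π/2`, so `cos β > 0`. The law of sines `c sin β = b sin γ` then turns
`sin β / cos β ≤ sin γ` into `b ≤ c cos β`.
-/

open EuclideanGeometry

section Triangle

variable {V P : Type*} [NormedAddCommGroup V] [InnerProductSpace ℝ V] [MetricSpace P]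
  [NormedAddTorsor V P]

theorem angle_lt_pi_div_two_of_dist_le {A B C : P}
    (hncol : ¬ Collinear ℝ ({A, B, C} : Set P)) (hle : dist A C ≤ dist A B) :
    ∠ A B C < Real.pi / 2 := by
  have hBC : ∠ A B C ≤ ∠ B C A := by
    rw [angle_comm B C A]
    exact (angle_le_iff_dist_le (by rwa [Set.pair_comm C B])).mpr hle
  have hsum := angle_add_angle_add_angle_eq_pi C (ne₁₂_of_not_collinear hncol).symm
  have hA : 0 < ∠ C A B := by
    rw [angle_comm]
    exact angle_pos_of_not_collinear (by rwa [Set.insert_comm B A])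
  linarith

theorem dist_le_dist_mul_cos_of_tan_le_sin {A B C : P}
    (hncol : ¬ Collinear ℝ ({A, B, C} : Set P)) (hB : ∠ A B C < Real.pi / 2)
    (htan : Real.tan (∠ A B C) ≤ Real.sin (∠ B C A)) :
    dist A C ≤ dist A B * Real.cos (∠ A B C) := by
  have hsin : 0 < Real.sin (∠ A B C) := sin_pos_of_not_collinear hncol
  have hcos : 0 < Real.cos (∠ A B C) :=
    Real.cos_pos_of_mem_Ioo ⟨by linarith [angle_nonneg A B C, Real.pi_pos], hB⟩
  have hsines : Real.sin (∠ A B C) * dist A B = Real.sin (∠ B C A) * dist A C := by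
    simpa only [angle_comm, dist_comm] using law_sin C B A
  rw [Real.tan_eq_sin_div_cos, div_le_iff₀ hcos] at htan
  refine le_of_mul_le_mul_left ?_ hsin
  calc Real.sin (∠ A B C) * dist A C
      ≤ Real.sin (∠ B C A) * Real.cos (∠ A B C) * dist A C := by gcongr
    _ = Real.sin (∠ A B C) * (dist A B * Real.cos (∠ A B C)) := by
        linear_combination Real.cos (∠ A B C) * hsines.symm

end Triangle

theorem tan_le_sin_imp_b_le_c_cos
    (A B C : EuclideanSpace ℝ (Fin 2))
    (hncol : ¬ Collinear ℝ ({A, B, C} : Set (EuclideanSpace ℝ (Fin 2))))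
    (b c : ℝ) (hb : b = dist A C) (hc : c = dist A B)
    (hbc : b ≤ c)
    (β γ : ℝ) (hβ : β = ∠ A B C) (hγ : γ = ∠ B C A)
    (h : Real.tan β ≤ Real.sin γ) :
    β < Real.pi / 2 ∧ b ≤ c * Real.cos β := by
  subst hb hc hβ hγ
  have hB := angle_lt_pi_div_two_of_dist_le hncol hbc
  exact ⟨hB, dist_le_dist_mul_cos_of_tan_le_sin hncol hB h⟩
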